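/- arXiv:math/0404370 — 6 statements merged into one kernel-verified Lean document; each statement's English description precedes it below -/
import Mathlib

section
/- Let M be a matroid on a finite ground set E and let ω ∈ ℝ^E. Then ω lies in the Bergman fan B̃(M) (i.e., every element of E lies in some ω-minimum basis) if and only if no circuit of M has a unique ω-maximum element. -/
open scoped Classical

variable {α : Type*}

/-- The ω-weight of a set of elements: the sum of ω over the set. -/
noncomputable def wSum (ω : α → ℝ) (B : Set α) : ℝ := ∑ᶠ e ∈ B, ω e

/-- `B` is an ω-minimum basis of `M`: a basis whose ω-weight is minimum among all bases. -/
def IsMinBase [Fintype α] (M : Matroid α) (ω : α → ℝ) (B : Set α) : Prop :=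
  M.IsBase B ∧ ∀ B' : Set α, M.IsBase B' → wSum ω B ≤ wSum ω B'

/-- `ω` lies in the Bergman fan of `M`: every element lies in some ω-minimum basis. -/
def InBergmanFan [Fintype α] (M : Matroid α) (ω : α → ℝ) : Prop :=
  ∀ e : α, ∃ B : Set α, IsMinBase M ω B ∧ e ∈ B

/-- `C` is a circuit of `M`: a minimal dependent set. -/
def IsCircuit (M : Matroid α) (C : Set α) : Prop := Minimal M.Dep C

/-- A cocircuit of `M` is a circuit of the dual matroid `M✶`. -/
def IsCocircuit (M : Matroid α) (C : Set α) : Prop := IsCircuit M✶ C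

/-!
In an ω-minimum basis `B`, whenever `insert a (B \ {b})` is again a basis, `ω b ≤ ω a`.
If a circuit `C` had a unique maximum `e`, take a minimum basis `B ∋ e`; some `f ∈ C \ {e}`
can replace `e` in `B`, and this strictly lowers the weight. Conversely, if `e` lies outside
a minimum basis `B`, the fundamental circuit of `e` with respect to `B` contains some `f ≠ e`
with `ω e ≤ ω f`, and swapping `f` for `e` yields a minimum basis containing `e`.
-/

lemma wSum_insert_sdiff (ω : α → ℝ) {S : Set α} (hS : S.Finite) {a b : α}
    (ha : a ∉ S) (hb : b ∈ S) :
    wSum ω (insert a (S \ {b})) = wSum ω S + ω a - ω b := by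
  have hS' : wSum ω S = ω b + wSum ω (S \ {b}) := by
    conv_lhs => rw [← Set.insert_sdiff_self_of_mem hb]
    exact finsum_mem_insert ω (fun h => h.2 rfl) hS.sdiff
  rw [wSum, finsum_mem_insert ω (fun h => ha h.1) hS.sdiff, ← wSum, hS']
  ring

namespace Matroid

variable {M : Matroid α} {B C : Set α} {e f : α}

lemma IsBase.exists_exchange_of_mem_isCircuit (hB : M.IsBase B) (heB : e ∈ B)
    (hC : M.IsCircuit C) (heC : e ∈ C) :
    ∃ f ∈ C \ {e}, f ∉ B ∧ M.IsBase (insert f (B \ {e})) := by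
  have hnot : ¬ C \ {e} ⊆ M.closure (B \ {e}) := fun hsub =>
    hB.indep.notMem_closure_sdiff_of_mem heB
      (closure_subset_closure_of_subset_closure hsub (hC.mem_closure_sdiff_singleton_of_mem heC))
  obtain ⟨f, hfC, hfcl⟩ := Set.not_subset.mp hnot
  refine ⟨f, hfC, fun hfB => hfcl (M.subset_closure _ ?_ ⟨hfB, hfC.2⟩),
    hB.exchange_base_of_notMem_closure heB hfcl (hC.subset_ground hfC.1)⟩
  exact Set.sdiff_subset.trans hB.subset_ground

lemma IsBase.exchange_of_mem_fundCircuit (hB : M.IsBase B) (heE : e ∈ M.E) (heB : e ∉ B)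
    (hf : f ∈ M.fundCircuit e B \ {e}) : M.IsBase (insert e (B \ {f})) := by
  have hecl : e ∈ M.closure B := by rwa [hB.closure_eq]
  have hind := (hB.indep.mem_fundCircuit_iff hecl heB).mp hf.1
  rw [← Set.insert_sdiff_singleton_comm (Ne.symm hf.2)] at hind
  exact hB.exchange_isBase_of_indep heB hind

end Matroid

section MinBase

variable [Fintype α] {M : Matroid α} {ω : α → ℝ} {B : Set α} {a b : α}

lemma exists_isMinBase (M : Matroid α) (ω : α → ℝ) : ∃ B, IsMinBase M ω B := by
  obtain ⟨B, hB, hmin⟩ := Set.exists_min_image {B | M.IsBase B} (wSum ω) (Set.toFinite _)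
    M.exists_isBase
  exact ⟨B, hB, hmin⟩

lemma IsMinBase.le_of_exchange (hB : IsMinBase M ω B) (ha : a ∉ B) (hb : b ∈ B)
    (hB' : M.IsBase (insert a (B \ {b}))) : ω b ≤ ω a := by
  have := hB.2 _ hB'
  rw [wSum_insert_sdiff ω (Set.toFinite B) ha hb] at this
  linarith

lemma IsMinBase.exchange (hB : IsMinBase M ω B) (ha : a ∉ B) (hb : b ∈ B)
    (hB' : M.IsBase (insert a (B \ {b}))) (hab : ω a ≤ ω b) :
    IsMinBase M ω (insert a (B \ {b})) := by
  refine ⟨hB', fun B'' hB'' => ?_⟩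
  rw [wSum_insert_sdiff ω (Set.toFinite B) ha hb]
  linarith [hB.2 B'' hB'']

end MinBase

/-- ω lies in the Bergman fan of M iff no circuit of M has a
unique ω-maximum element. -/
theorem stmt0 [Fintype α] (M : Matroid α) (hE : M.E = Set.univ) (ω : α → ℝ) :
    InBergmanFan M ω ↔
      ¬ ∃ C : Set α, IsCircuit M C ∧ ∃ e ∈ C, ∀ f ∈ C \ {e}, ω f < ω e := by
  constructor
  · rintro hfan ⟨C, hC, e, heC, hmax⟩
    obtain ⟨B, hB, heB⟩ := hfan e
    obtain ⟨f, hfC, hfB, hB'⟩ := hB.1.exists_exchange_of_mem_isCircuit heB hC heC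
    exact (hB.le_of_exchange hfB heB hB').not_gt (hmax f hfC)
  · intro hno e
    obtain ⟨B, hB⟩ := exists_isMinBase M ω
    by_cases heB : e ∈ B
    · exact ⟨B, hB, heB⟩
    have heE : e ∈ M.E := hE ▸ Set.mem_univ e
    obtain ⟨f, hf, hef⟩ : ∃ f ∈ M.fundCircuit e B \ {e}, ω e ≤ ω f := by
      by_contra! h
      exact hno ⟨_, hB.1.fundCircuit_isCircuit heE heB, e, M.mem_fundCircuit e B, h⟩
    have hfB : f ∈ B := (M.fundCircuit_subset_insert e B hf.1).resolve_left hf.2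
    exact ⟨_, hB.exchange heB hfB (hB.1.exchange_of_mem_fundCircuit heE heB hf) hef,
      Set.mem_insert e _⟩
end

section
/- Let M be a matroid on a finite ground set E, let ω ∈ ℝ^E, and let e ∈ E. Then e is ω-minimum in some cocircuit of M if and only if e is not the unique ω-maximum element of any circuit of M. (Equivalently: the blue rule applies to e if and only if the red rule applies to e.) -/
open scoped Classical

variable {α : Type*}

/-!
A circuit and a cocircuit never meet in exactly one element, so if `e` is ω-minimum in a
cocircuit `K` and the unique ω-maximum of a circuit `C`, a second element of `C ∩ K` would be
both strictly lighter than `e` and at least as heavy. Conversely, if `e` is the unique maximum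
of no circuit, then `e` is not spanned by the strictly lighter elements `S`; extending a basis
of `S` by `e` to a base `B`, the fundamental cocircuit `E \ cl(B \ {e})` contains `e` and
avoids `S`.
-/

namespace Matroid

theorem exists_isCocircuit_mem_disjoint_of_notMem_closure {M : Matroid α} {X : Set α} {e : α}
    (heE : e ∈ M.E) (heX : e ∉ M.closure X) :
    ∃ K, M.IsCocircuit K ∧ e ∈ K ∧ Disjoint K X := by
  obtain ⟨I, hI⟩ := M.exists_isBasis' X
  rw [← hI.closure_eq_closure] at heX
  have heI : e ∉ I := fun h ↦ heX (M.subset_closure I hI.indep.subset_ground h)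
  have hins : M.Indep (insert e I) := ((hI.indep.notMem_closure_iff heE).1 heX).1
  obtain ⟨B, hB, hIB⟩ := hins.exists_isBase_superset
  have heB : e ∈ B := hIB (Set.mem_insert e I)
  have hXcl : M.closure X ⊆ M.closure (B \ {e}) := by
    rw [← hI.closure_eq_closure]
    exact M.closure_subset_closure
      (Set.subset_sdiff_singleton ((Set.subset_insert e I).trans hIB) heI)
  refine ⟨M.E \ M.closure (B \ {e}), hB.compl_closure_sdiff_singleton_isCocircuit heB,
    ⟨heE, hB.indep.notMem_closure_sdiff_of_mem heB⟩, ?_⟩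
  rw [Set.disjoint_left]
  rintro x ⟨hxE, hxcl⟩ hxX
  exact hxcl (hXcl (M.inter_ground_subset_closure X ⟨hxX, hxE⟩))

end Matroid

theorem stmt6_general (M : Matroid α) (hE : M.E = Set.univ) (ω : α → ℝ) (e : α) :
    (∃ C : Set α, IsCocircuit M C ∧ e ∈ C ∧ ∀ f ∈ C, ω e ≤ ω f) ↔
      ¬ ∃ C : Set α, IsCircuit M C ∧ e ∈ C ∧ ∀ f ∈ C \ {e}, ω f < ω e := by
  constructor
  · rintro ⟨K, hK, heK, hmin⟩ ⟨C, hC, heC, hmax⟩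
    obtain ⟨f, ⟨hfC, hfK⟩, hfe⟩ :=
      (Matroid.IsCircuit.isCocircuit_inter_nontrivial hC hK ⟨e, heC, heK⟩).exists_ne e
    exact (hmax f ⟨hfC, hfe⟩).not_ge (hmin f hfK)
  · intro hno
    have he : e ∉ M.closure {f | ω f < ω e} := fun hcl ↦ by
      obtain ⟨C, hCS, hC, heC⟩ := M.exists_isCircuit_of_mem_closure hcl (lt_irrefl (ω e))
      exact hno ⟨C, hC, heC, fun f hf ↦ (hCS hf.1).resolve_left hf.2⟩
    obtain ⟨K, hK, heK, hKS⟩ :=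
      Matroid.exists_isCocircuit_mem_disjoint_of_notMem_closure (hE ▸ Set.mem_univ e) he
    exact ⟨K, hK, heK, fun f hf ↦ not_lt.1 (Set.disjoint_left.1 hKS hf)⟩

/-- For any matroid M, ω ∈ ℝ^E and e ∈ E: e is ω-minimum in some
cocircuit of M iff e is not the unique ω-maximum element of any circuit of M. -/
theorem stmt6 [Fintype α] (M : Matroid α) (hE : M.E = Set.univ) (ω : α → ℝ) (e : α) :
    (∃ C : Set α, IsCocircuit M C ∧ e ∈ C ∧ ∀ f ∈ C, ω e ≤ ω f) ↔
      ¬ ∃ C : Set α, IsCircuit M C ∧ e ∈ C ∧ ∀ f ∈ C \ {e}, ω f < ω e :=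
  stmt6_general M hE ω e
end

section
/- Let M be a loopless matroid on a finite ground set E, let ω ∈ ℝ^E, and let B be an ω-minimum basis of M. Then for every e ∈ B, the subdominant M-ultrametric satisfies ω^M_e = ω_e. -/
open scoped Classical

variable {α : Type*}

/-!
To show `ω^M_e ≥ ω_e` on `B` it suffices to exhibit one `M`-ultrametric `u ≤ ω` with `u = ω`
on `B`. Take `u e = max {ω g | g ∈ C(e, B) ∩ B}`, where `C(e, B)` is the fundamental circuit
of `e` with respect to `B`; this is `ω e` for `e ∈ B`. Exchanging `e` for `g ∈ C(e, B)` turns `B`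
into a basis, so minimality of `B` gives `u ≤ ω`. Since `u g ≤ u f` whenever `g ∈ C(f, B) ∩ B`,
the exchange argument shows that `B` is `u`-minimum, and exchanging `e` for a maximiser `g`
of the defining maximum yields a `u`-minimum basis containing `e`.
-/

open Set

lemma wSum_insert_sdiff_singleton (u : α → ℝ) {S : Set α} {x y : α} (hS : S.Finite)
    (hy : y ∈ S) (hx : x ∉ S \ {y}) :
    wSum u (insert x (S \ {y})) = wSum u S - u y + u x := by
  have hS' : (S \ {y}).Finite := hS.sdiff
  have hsplit : wSum u S = u y + wSum u (S \ {y}) := by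
    rw [wSum, wSum, ← finsum_mem_insert u (fun h => h.2 rfl) hS', insert_sdiff_singleton,
      insert_eq_of_mem hy]
  rw [hsplit, wSum, finsum_mem_insert u hx hS', ← wSum]
  ring

namespace Matroid

variable {M : Matroid α} {B B' : Set α} {e f g : α}

lemma notMem_sdiff_singleton_of_mem_fundCircuit (hg : g ∈ M.fundCircuit e B) :
    e ∉ B \ {g} := by
  rintro ⟨heB, hge⟩
  rw [fundCircuit_eq_of_mem heB] at hg
  exact hge hg.symm

lemma IsBase.fundCircuit_inter_nonempty (hB : M.IsBase B) (he : M.Indep {e}) :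
    (M.fundCircuit e B ∩ B).Nonempty := by
  by_cases heB : e ∈ B
  · exact ⟨e, M.mem_fundCircuit e B, heB⟩
  have hC := hB.fundCircuit_isCircuit (he.subset_ground (mem_singleton e)) heB
  rw [← M.fundCircuit_sdiff_eq_inter heB, nonempty_iff_ne_empty, Ne, sdiff_eq_empty]
  exact fun hsub => hC.not_indep (he.subset hsub)

lemma IsBase.insert_sdiff_isBase_of_mem_fundCircuit (hB : M.IsBase B) (he : e ∈ M.E)
    (hg : g ∈ M.fundCircuit e B ∩ B) : M.IsBase (insert e (B \ {g})) := by
  by_cases heB : e ∈ B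
  · obtain rfl : g = e := by simpa [fundCircuit_eq_of_mem heB] using hg.1
    rwa [insert_sdiff_singleton, insert_eq_of_mem heB]
  have hindep := (hB.indep.mem_fundCircuit_iff (by rwa [hB.closure_eq]) heB).mp hg.1
  rw [insert_sdiff_singleton_comm (ne_of_mem_of_not_mem hg.2 heB).symm]
  exact hB.exchange_isBase_of_indep' hg.2 heB hindep

lemma IsBase.exists_mem_fundCircuit_insert_sdiff_isBase (hB : M.IsBase B) (hB' : M.IsBase B')
    (hf : f ∈ B' \ B) :
    ∃ g ∈ M.fundCircuit f B ∩ B, g ∉ B' ∧ M.IsBase (insert g (B' \ {f})) := by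
  have hC := hB.fundCircuit_isCircuit (hB'.subset_ground hf.1) hf.2
  have hfC := hC.mem_closure_sdiff_singleton_of_mem (M.mem_fundCircuit f B)
  obtain ⟨g, hgC, hgcl⟩ := not_subset.mp fun hsub =>
    hB'.indep.notMem_closure_sdiff_of_mem hf.1 (M.closure_subset_closure_of_subset_closure hsub hfC)
  have hgB' : g ∉ B' := fun hgB' =>
    hgcl (M.subset_closure _ (sdiff_subset.trans hB'.subset_ground) ⟨hgB', hgC.2⟩)
  exact ⟨g, M.fundCircuit_sdiff_eq_inter hf.2 ▸ hgC, hgB',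
    hB'.exchange_base_of_notMem_closure hf.1 hgcl (hC.subset_ground hgC.1)⟩

end Matroid

open Matroid

section

variable {M : Matroid α} {ω u : α → ℝ} {B : Set α} {e g : α}

lemma IsMinBase.le_of_mem_fundCircuit [Fintype α] (hB : IsMinBase M ω B) (he : e ∈ M.E)
    (hg : g ∈ M.fundCircuit e B ∩ B) : ω g ≤ ω e := by
  have hle := hB.2 _ (hB.1.insert_sdiff_isBase_of_mem_fundCircuit he hg)
  rw [wSum_insert_sdiff_singleton ω (toFinite B) hg.2
    (notMem_sdiff_singleton_of_mem_fundCircuit hg.1)] at hle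
  linarith

theorem isMinBase_of_forall_mem_fundCircuit [Fintype α] (hB : M.IsBase B)
    (hu : ∀ f g, g ∈ M.fundCircuit f B ∩ B → u g ≤ u f) : IsMinBase M u B := by
  refine ⟨hB, fun B' hB' => ?_⟩
  induction hn : (B' \ B).ncard generalizing B' with
  | zero =>
    rw [hB'.eq_of_subset_isBase hB (sdiff_eq_empty.mp ((ncard_eq_zero (toFinite _)).mp hn))]
  | succ n ih =>
    obtain ⟨f, hf⟩ := nonempty_of_ncard_ne_zero (by rw [hn]; exact n.succ_ne_zero)
    obtain ⟨g, hg, hgB', hB''⟩ := hB.exists_mem_fundCircuit_insert_sdiff_isBase hB' hf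
    have hn' : (insert g (B' \ {f}) \ B).ncard = n := by
      rw [insert_sdiff_of_mem _ hg.2, Set.sdiff_sdiff_comm, ncard_sdiff_singleton_of_mem hf, hn,
        Nat.add_sub_cancel]
    calc wSum u B ≤ wSum u (insert g (B' \ {f})) := ih _ hB'' hn'
      _ = wSum u B' - u f + u g :=
        wSum_insert_sdiff_singleton u (toFinite B') hf.1 fun h => hgB' h.1
      _ ≤ wSum u B' := by linarith [hu f g hg]

/-- For `e ∉ B` the set `C(e, B) ∩ B` is `C(e, B) \ {e}`; for `e ∈ B` it is `{e}`, through the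
junk value of `Matroid.fundCircuit`. -/
noncomputable def fundCircuitMax (M : Matroid α) (ω : α → ℝ) (B : Set α) (e : α) : ℝ :=
  sSup (ω '' (M.fundCircuit e B ∩ B))

lemma fundCircuitMax_of_mem (he : e ∈ B) : fundCircuitMax M ω B e = ω e := by
  rw [fundCircuitMax, fundCircuit_eq_of_mem he, singleton_inter_of_mem he, image_singleton,
    csSup_singleton]

lemma le_fundCircuitMax [Finite α] (hg : g ∈ M.fundCircuit e B ∩ B) :
    ω g ≤ fundCircuitMax M ω B e :=
  le_csSup (toFinite _).bddAbove (mem_image_of_mem ω hg)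

lemma exists_eq_fundCircuitMax [Finite α] (hB : M.IsBase B) (he : M.Indep {e}) :
    ∃ g ∈ M.fundCircuit e B ∩ B, ω g = fundCircuitMax M ω B e :=
  ((hB.fundCircuit_inter_nonempty he).image ω).csSup_mem (toFinite _)

lemma fundCircuitMax_le [Fintype α] (hB : IsMinBase M ω B) (he : M.Indep {e}) :
    fundCircuitMax M ω B e ≤ ω e :=
  csSup_le ((hB.1.fundCircuit_inter_nonempty he).image ω) <| forall_mem_image.2 fun _ hg =>
    hB.le_of_mem_fundCircuit (he.subset_ground (mem_singleton e)) hg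

lemma isMinBase_fundCircuitMax [Fintype α] (hB : M.IsBase B) :
    IsMinBase M (fundCircuitMax M ω B) B :=
  isMinBase_of_forall_mem_fundCircuit hB fun _ _ hg => by
    rw [fundCircuitMax_of_mem hg.2]
    exact le_fundCircuitMax hg

lemma inBergmanFan_fundCircuitMax [Fintype α] (hB : M.IsBase B)
    (hloopless : ∀ e, M.Indep {e}) : InBergmanFan M (fundCircuitMax M ω B) := by
  intro e
  obtain ⟨g, hg, hωg⟩ := exists_eq_fundCircuitMax (ω := ω) hB (hloopless e)
  have he : e ∈ M.E := (hloopless e).subset_ground (mem_singleton e)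
  refine ⟨insert e (B \ {g}),
    ⟨hB.insert_sdiff_isBase_of_mem_fundCircuit he hg, fun B' hB' => ?_⟩, mem_insert _ _⟩
  calc wSum (fundCircuitMax M ω B) (insert e (B \ {g}))
      = wSum (fundCircuitMax M ω B) B - fundCircuitMax M ω B g + fundCircuitMax M ω B e :=
        wSum_insert_sdiff_singleton _ (toFinite B) hg.2
          (notMem_sdiff_singleton_of_mem_fundCircuit hg.1)
    _ = wSum (fundCircuitMax M ω B) B := by rw [fundCircuitMax_of_mem hg.2, hωg]; ring
    _ ≤ wSum (fundCircuitMax M ω B) B' := (isMinBase_fundCircuitMax hB).2 B' hB'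

end

theorem stmt7_general [Fintype α] (M : Matroid α)
    (hloopless : ∀ e : α, M.Indep {e}) (ω usub : α → ℝ)
    (h2 : ∀ e, usub e ≤ ω e)
    (h3 : ∀ u : α → ℝ, InBergmanFan M u → (∀ e, u e ≤ ω e) → ∀ e, u e ≤ usub e)
    (B : Set α) (hB : IsMinBase M ω B) :
    ∀ e ∈ B, usub e = ω e := by
  intro e he
  have hle := h3 (fundCircuitMax M ω B) (inBergmanFan_fundCircuitMax hB.1 hloopless)
    (fun f => fundCircuitMax_le hB (hloopless f)) e
  rw [fundCircuitMax_of_mem he] at hle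
  exact le_antisymm (h2 e) hle

/-- For a loopless matroid M, ω ∈ ℝ^E and an ω-minimum basis B:
the subdominant M-ultrametric agrees with ω on every element of B. -/
theorem stmt7 [Fintype α] (M : Matroid α) (hE : M.E = Set.univ)
    (hloopless : ∀ e : α, M.Indep {e}) (ω usub : α → ℝ)
    (h1 : InBergmanFan M usub) (h2 : ∀ e, usub e ≤ ω e)
    (h3 : ∀ u : α → ℝ, InBergmanFan M u → (∀ e, u e ≤ ω e) → ∀ e, u e ≤ usub e)
    (B : Set α) (hB : IsMinBase M ω B) :
    ∀ e ∈ B, usub e = ω e :=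
  stmt7_general M hloopless ω usub h2 h3 B hB
end

section
/- Let M be a matroid on a finite ground set E, let ω ∈ ℝ^E, let B be an ω-minimum basis of M, let e ∈ E \ B, and let C_0 be the fundamental circuit of B and e. Then for every circuit C of M containing e, max_{f ∈ C \ {e}} ω_f ≥ max_{f ∈ C_0 \ {e}} ω_f; consequently min over circuits C containing e of max_{f ∈ C \ {e}} ω_f equals max_{f ∈ C_0 \ {e}} ω_f. -/
open scoped Classical

variable {α : Type*}

/-!
Let `f ∈ C₀ \ {e}`, so `f ∈ B`. The closure `H` of `B \ {f}` is a hyperplane that misses `e`: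
otherwise `f ∈ cl(C₀ \ {f}) ⊆ cl(insert e (B \ {f})) = H`, contradicting independence of `B`.
A circuit `C ∋ e` has `e ∈ cl(C \ {e})`, so some `g ∈ C \ {e}` lies outside `H`; then
`B - f + g` is a basis and minimality of `B` gives `ω f ≤ ω g`. Hence every weight on `C₀ \ {e}`
is dominated by one on `C \ {e}`, and `C₀` itself attains the minimum.
-/

open Set

lemma wSum_insert (ω : α → ℝ) {S : Set α} {g : α} (hg : g ∉ S) (hS : S.Finite) :
    wSum ω (insert g S) = ω g + wSum ω S :=
  finsum_mem_insert ω hg hS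

lemma IsMinBase.weight_le_of_notMem_closure [Fintype α] {M : Matroid α} {ω : α → ℝ} {B : Set α}
    (hB : IsMinBase M ω B) {f g : α} (hf : f ∈ B) (hg : g ∉ M.closure (B \ {f}))
    (hgE : g ∈ M.E) : ω f ≤ ω g := by
  have hexch : M.IsBase (insert g (B \ {f})) := hB.1.exchange_base_of_notMem_closure hf hg
  have hgB : g ∉ B \ {f} := fun h ↦
    hg (M.subset_closure _ (sdiff_subset.trans hB.1.subset_ground) h)
  have hweight := hB.2 _ hexch
  rw [← insert_sdiff_self_of_mem hf, wSum_insert ω (fun h ↦ h.2 rfl) (toFinite _),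
    insert_sdiff_self_of_mem hf, wSum_insert ω hgB (toFinite _)] at hweight
  linarith

namespace Matroid

lemma Indep.notMem_closure_sdiff_of_isCircuit_subset_insert {M : Matroid α} {I C₀ : Set α}
    {e f : α} (hI : M.Indep I) (hC₀ : M.IsCircuit C₀) (hC₀I : C₀ ⊆ insert e I) (hf : f ∈ C₀)
    (hfe : f ≠ e) : e ∉ M.closure (I \ {f}) := by
  intro he
  have hfI : f ∈ I := (hC₀I hf).resolve_left hfe
  have hsub : C₀ \ {f} ⊆ insert e (I \ {f}) := fun x hx ↦
    (hC₀I hx.1).imp_right fun hxI ↦ ⟨hxI, hx.2⟩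
  refine hI.notMem_closure_sdiff_of_mem hfI ?_
  rw [← closure_insert_eq_of_mem_closure he]
  exact M.closure_subset_closure hsub (hC₀.mem_closure_sdiff_singleton_of_mem hf)

lemma IsCircuit.exists_mem_sdiff_notMem_closure {M : Matroid α} {C X : Set α} {e : α}
    (hC : M.IsCircuit C) (heC : e ∈ C) (heX : e ∉ M.closure X) :
    ∃ g ∈ C \ {e}, g ∉ M.closure X := by
  by_contra! h
  exact heX (M.closure_subset_closure_of_subset_closure h
    (hC.mem_closure_sdiff_singleton_of_mem heC))

end Matroid

lemma IsMinBase.exists_weight_le_of_isCircuit [Fintype α] {M : Matroid α} {ω : α → ℝ}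
    {B C₀ C : Set α} {e : α} (hB : IsMinBase M ω B) (hC₀ : M.IsCircuit C₀)
    (hC₀B : C₀ ⊆ insert e B) (hC : M.IsCircuit C) (heC : e ∈ C) :
    ∀ f ∈ C₀ \ {e}, ∃ g ∈ C \ {e}, ω f ≤ ω g := by
  rintro f ⟨hfC₀, hfe⟩
  have heH := hB.1.indep.notMem_closure_sdiff_of_isCircuit_subset_insert hC₀ hC₀B hfC₀ hfe
  obtain ⟨g, hgC, hgH⟩ := hC.exists_mem_sdiff_notMem_closure heC heH
  exact ⟨g, hgC, hB.weight_le_of_notMem_closure ((hC₀B hfC₀).resolve_left hfe) hgH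
    (hC.subset_ground hgC.1)⟩

lemma IsMinBase.sSup_image_sdiff_le_of_isCircuit [Fintype α] {M : Matroid α} {ω : α → ℝ}
    {B C₀ C : Set α} {e : α} (hB : IsMinBase M ω B) (hC₀ : M.IsCircuit C₀)
    (hC₀B : C₀ ⊆ insert e B) (hC : M.IsCircuit C) (heC : e ∈ C) :
    sSup (ω '' (C₀ \ {e})) ≤ sSup (ω '' (C \ {e})) := by
  obtain hempty | hne := (C₀ \ {e}).eq_empty_or_nonempty
  · have hC₀C : C₀ ⊆ C := (sdiff_eq_empty.1 hempty).trans (singleton_subset_iff.2 heC)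
    rw [hC₀.eq_of_subset_isCircuit hC hC₀C]
  refine csSup_le (hne.image ω) ?_
  rintro _ ⟨f, hf, rfl⟩
  obtain ⟨g, hg, hfg⟩ := hB.exists_weight_le_of_isCircuit hC₀ hC₀B hC heC f hf
  exact hfg.trans (le_csSup ((toFinite _).image ω).bddAbove (mem_image_of_mem ω hg))

theorem stmt9_general [Fintype α] (M : Matroid α) (ω : α → ℝ)
    (B : Set α) (hB : IsMinBase M ω B) (e : α)
    (C₀ : Set α) (hC₀ : IsCircuit M C₀) (heC₀ : e ∈ C₀) (hC₀B : C₀ ⊆ insert e B) :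
    (∀ C : Set α, IsCircuit M C → e ∈ C →
        sSup (ω '' (C₀ \ {e})) ≤ sSup (ω '' (C \ {e}))) ∧
      sInf {r : ℝ | ∃ C : Set α, IsCircuit M C ∧ e ∈ C ∧ r = sSup (ω '' (C \ {e}))} =
        sSup (ω '' (C₀ \ {e})) := by
  have hle : ∀ C : Set α, IsCircuit M C → e ∈ C →
      sSup (ω '' (C₀ \ {e})) ≤ sSup (ω '' (C \ {e})) :=
    fun C hC heC ↦ hB.sSup_image_sdiff_le_of_isCircuit hC₀ hC₀B hC heC
  refine ⟨hle, IsLeast.csInf_eq ⟨⟨C₀, hC₀, heC₀, rfl⟩, ?_⟩⟩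
  rintro _ ⟨C, hC, heC, rfl⟩
  exact hle C hC heC

/-- For a matroid M, ω ∈ ℝ^E, an ω-minimum basis B, an element e ∉ B,
and the fundamental circuit C₀ of B and e: every circuit C containing e satisfies
max_{f ∈ C \ {e}} ω_f ≥ max_{f ∈ C₀ \ {e}} ω_f; consequently the minimum over circuits C
containing e of max_{f ∈ C \ {e}} ω_f equals max_{f ∈ C₀ \ {e}} ω_f. -/
theorem stmt9 [Fintype α] (M : Matroid α) (hE : M.E = Set.univ) (ω : α → ℝ)
    (B : Set α) (hB : IsMinBase M ω B) (e : α) (he : e ∉ B)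
    (C₀ : Set α) (hC₀ : IsCircuit M C₀) (heC₀ : e ∈ C₀) (hC₀B : C₀ ⊆ insert e B) :
    (∀ C : Set α, IsCircuit M C → e ∈ C →
        sSup (ω '' (C₀ \ {e})) ≤ sSup (ω '' (C \ {e}))) ∧
      sInf {r : ℝ | ∃ C : Set α, IsCircuit M C ∧ e ∈ C ∧ r = sSup (ω '' (C \ {e}))} =
        sSup (ω '' (C₀ \ {e})) :=
  stmt9_general M ω B hB e C₀ hC₀ heC₀ hC₀B
end

section
/- Let M be a loopless matroid on a finite nonempty ground set E, let ω ∈ ℝ^E, let ω^M be the subdominant M-ultrametric of ω, and set ε = (1/2) · max_{e ∈ E} (ω_e − ω^M_e). Then the vector ω^M + ε·𝟙 (adding ε to every coordinate) lies in B̃(M), and it is an ℓ∞-nearest M-ultrametric to ω: for every u ∈ B̃(M), max_{e ∈ E} |ω_e − (ω^M_e + ε)| ≤ max_{e ∈ E} |ω_e − u_e|, and moreover max_{e ∈ E} |ω_e − (ω^M_e + ε)| = ε. -/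
open scoped Classical

variable {α : Type*}

/-!
All bases of a matroid have the same cardinality, so adding a constant to a weight function
shifts the weights of all bases equally and preserves the Bergman fan. If an M-ultrametric `u`
is at ℓ∞-distance `d` from `ω`, then `u - d` is an M-ultrametric below `ω`, hence below the
subdominant one `ω^M`; so `ω - ω^M ≤ 2d` everywhere, i.e. `ε ≤ d`. The shift `ω^M + ε` is at
distance exactly `ε`, since `0 ≤ ω - ω^M ≤ 2ε` with equality on the right somewhere.
-/

open Finset

lemma wSum_add_const {B : Set α} (hB : B.Finite) (ω : α → ℝ) (c : ℝ) :
    wSum (fun e => ω e + c) B = wSum ω B + B.ncard * c := by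
  rw [wSum, wSum, ← hB.coe_toFinset, finsum_mem_coe_finset, finsum_mem_coe_finset,
    sum_add_distrib, sum_const, Set.ncard_coe_finset, nsmul_eq_mul]

lemma InBergmanFan.add_const [Fintype α] {M : Matroid α} {ω : α → ℝ}
    (h : InBergmanFan M ω) (c : ℝ) : InBergmanFan M (fun e => ω e + c) := by
  intro e
  obtain ⟨B, ⟨hB, hmin⟩, heB⟩ := h e
  refine ⟨B, ⟨hB, fun B' hB' => ?_⟩, heB⟩
  rw [wSum_add_const B.toFinite, wSum_add_const B'.toFinite, hB.ncard_eq_ncard_of_isBase hB']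
  linarith [hmin B' hB']

section Linfty

variable [Fintype α] [Nonempty α]

lemma sup'_abs_sub_add_half_sup'_eq {ω v : α → ℝ} (hv : ∀ e, v e ≤ ω e) {ε : ℝ}
    (hε : ε = (1 / 2) * univ.sup' univ_nonempty (fun e : α => ω e - v e)) :
    univ.sup' univ_nonempty (fun e : α => |ω e - (v e + ε)|) = ε := by
  have hle : ∀ e, ω e - v e ≤ 2 * ε := fun e => by
    rw [hε]; linarith [le_sup' (fun e : α => ω e - v e) (mem_univ e)]
  obtain ⟨e₀, -, he₀⟩ := exists_mem_eq_sup' univ_nonempty (fun e : α => ω e - v e)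
  have hε₀ : ω e₀ - (v e₀ + ε) = ε := by rw [hε, he₀]; ring
  apply le_antisymm
  · refine sup'_le _ _ fun e _ => abs_le.mpr ⟨?_, ?_⟩ <;> linarith [hv e, hle e]
  · calc ε = |ω e₀ - (v e₀ + ε)| := by rw [hε₀, abs_of_nonneg (by linarith [hv e₀])]
      _ ≤ _ := le_sup' (fun e : α => |ω e - (v e + ε)|) (mem_univ e₀)

lemma sup'_sub_le_two_mul_of_abs_sub_le {ω u v : α → ℝ} {d : ℝ}
    (hd : ∀ e, |ω e - u e| ≤ d) (huv : ∀ e, u e - d ≤ v e) :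
    univ.sup' univ_nonempty (fun e : α => ω e - v e) ≤ 2 * d :=
  sup'_le _ _ fun e _ => by linarith [(abs_le.mp (hd e)).2, huv e]

end Linfty

theorem stmt14_general [Fintype α] [Nonempty α] (M : Matroid α) (ω usub : α → ℝ)
    (h1 : InBergmanFan M usub) (h2 : ∀ e, usub e ≤ ω e)
    (h3 : ∀ u : α → ℝ, InBergmanFan M u → (∀ e, u e ≤ ω e) → ∀ e, u e ≤ usub e)
    (ε : ℝ)
    (hε : ε = (1 / 2) * Finset.univ.sup' Finset.univ_nonempty (fun e : α => ω e - usub e)) :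
    InBergmanFan M (fun e => usub e + ε) ∧
    (∀ u : α → ℝ, InBergmanFan M u →
      Finset.univ.sup' Finset.univ_nonempty (fun e : α => |ω e - (usub e + ε)|) ≤
        Finset.univ.sup' Finset.univ_nonempty (fun e : α => |ω e - u e|)) ∧
    Finset.univ.sup' Finset.univ_nonempty (fun e : α => |ω e - (usub e + ε)|) = ε := by
  have hdist := sup'_abs_sub_add_half_sup'_eq h2 hε
  refine ⟨h1.add_const ε, fun u hu => ?_, hdist⟩
  set d := univ.sup' univ_nonempty (fun e : α => |ω e - u e|)
  have hd : ∀ e, |ω e - u e| ≤ d := fun e => le_sup' (fun e : α => |ω e - u e|) (mem_univ e)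
  have hbelow : ∀ e, u e + -d ≤ ω e := fun e => by linarith [(abs_le.mp (hd e)).1]
  have hsub : ∀ e, u e - d ≤ usub e := fun e => by
    simpa only [sub_eq_add_neg] using h3 _ (hu.add_const (-d)) hbelow e
  rw [hdist, hε]
  linarith [sup'_sub_le_two_mul_of_abs_sub_le hd hsub]

/-- For a loopless matroid M on a finite nonempty ground set, ω ∈ ℝ^E,
the subdominant M-ultrametric ω^M, and ε = (1/2)·max_e (ω_e − ω^M_e): the shifted vector
ω^M + ε·𝟙 lies in the Bergman fan, it is an ℓ∞-nearest M-ultrametric to ω, and its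
ℓ∞-distance to ω equals ε. -/
theorem stmt14 [Fintype α] [Nonempty α] (M : Matroid α) (hE : M.E = Set.univ)
    (hloopless : ∀ e : α, M.Indep {e}) (ω usub : α → ℝ)
    (h1 : InBergmanFan M usub) (h2 : ∀ e, usub e ≤ ω e)
    (h3 : ∀ u : α → ℝ, InBergmanFan M u → (∀ e, u e ≤ ω e) → ∀ e, u e ≤ usub e)
    (ε : ℝ)
    (hε : ε = (1 / 2) * Finset.univ.sup' Finset.univ_nonempty (fun e : α => ω e - usub e)) :
    InBergmanFan M (fun e => usub e + ε) ∧
    (∀ u : α → ℝ, InBergmanFan M u →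
      Finset.univ.sup' Finset.univ_nonempty (fun e : α => |ω e - (usub e + ε)|) ≤
        Finset.univ.sup' Finset.univ_nonempty (fun e : α => |ω e - u e|)) ∧
    Finset.univ.sup' Finset.univ_nonempty (fun e : α => |ω e - (usub e + ε)|) = ε :=
  stmt14_general M ω usub h1 h2 h3 ε hε
end

section
/- Let X be a finite set with at least two elements and let ω be a dissimilarity map on X. Then the subdominant ultrametric ω_U (defined by path-minimax) is an ultrametric, satisfies ω_U(x,y) ≤ ω(x,y) for all x, y ∈ X, and is the greatest such ultrametric: every ultrametric δ on X with δ(x,y) ≤ ω(x,y) for all x, y satisfies δ(x,y) ≤ ω_U(x,y) for all x, y. -/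
/-!
Every value of a path from `x` to `y` is one of the finitely many values of `ω`, so the minimum
defining `ω_U x y` is attained. Concatenating optimal paths `x ⇝ y` and `y ⇝ z` gives the strong
triangle inequality, and reversing an optimal path gives symmetry. Conversely, along any path
with distinct endpoints an ultrametric `δ` is bounded by its largest step, hence by the path's
`ω`-value when `δ ≤ ω`.
-/

open scoped Classical

variable {X : Type*}

/-- A dissimilarity map on X: a symmetric function vanishing on the diagonal. -/
def IsDissimilarity (δ : X → X → ℝ) : Prop :=
  (∀ x, δ x x = 0) ∧ ∀ x y, δ x y = δ y x

/-- An ultrametric on X: a dissimilarity map satisfying the strong triangle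
inequality on pairwise distinct triples. -/
def IsUltrametricMap (δ : X → X → ℝ) : Prop :=
  IsDissimilarity δ ∧
    ∀ x y z : X, x ≠ y → y ≠ z → x ≠ z → δ x z ≤ max (δ x y) (δ y z)

/-- The subdominant ultrametric of ω: for x ≠ y, the minimum over all finite
sequences x = v₀, v₁, …, v_m = y (m ≥ 1) of the largest weight ω(v_{t-1}, v_t)
of a step of the sequence. -/
noncomputable def subdomUltra (ω : X → X → ℝ) (x y : X) : ℝ :=
  if x = y then 0 else
    sInf {r : ℝ | ∃ (m : ℕ) (hm : 1 ≤ m) (v : ℕ → X), v 0 = x ∧ v m = y ∧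
      r = (Finset.Icc 1 m).sup' (Finset.nonempty_Icc.mpr hm)
            (fun t => ω (v (t - 1)) (v t))}

noncomputable def pathMax (ω : X → X → ℝ) (m : ℕ) (hm : 1 ≤ m) (v : ℕ → X) : ℝ :=
  (Finset.Icc 1 m).sup' (Finset.nonempty_Icc.mpr hm) fun t => ω (v (t - 1)) (v t)

def pathWeights (ω : X → X → ℝ) (x y : X) : Set ℝ :=
  {r | ∃ (m : ℕ) (hm : 1 ≤ m) (v : ℕ → X), v 0 = x ∧ v m = y ∧ r = pathMax ω m hm v}

section pathMax

variable {ω : X → X → ℝ} {m : ℕ} {hm : 1 ≤ m} {v : ℕ → X}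

lemma step_le_pathMax {t : ℕ} (ht₁ : 1 ≤ t) (ht₂ : t ≤ m) :
    ω (v (t - 1)) (v t) ≤ pathMax ω m hm v :=
  Finset.le_sup' (fun t => ω (v (t - 1)) (v t)) (Finset.mem_Icc.mpr ⟨ht₁, ht₂⟩)

lemma pathMax_le {r : ℝ} (h : ∀ t, 1 ≤ t → t ≤ m → ω (v (t - 1)) (v t) ≤ r) :
    pathMax ω m hm v ≤ r :=
  Finset.sup'_le _ _ fun t ht => h t (Finset.mem_Icc.mp ht).1 (Finset.mem_Icc.mp ht).2

lemma pathMax_mono {δ : X → X → ℝ} (h : ∀ a b, δ a b ≤ ω a b) :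
    pathMax δ m hm v ≤ pathMax ω m hm v :=
  Finset.sup'_mono_fun fun _ _ => h _ _

lemma pathMax_mem_range : pathMax ω m hm v ∈ Set.range (Function.uncurry ω) := by
  obtain ⟨t, -, ht⟩ := Finset.exists_mem_eq_sup' (Finset.nonempty_Icc.mpr hm)
    fun t => ω (v (t - 1)) (v t)
  exact ⟨(v (t - 1), v t), ht.symm⟩

end pathMax

lemma IsUltrametricMap.le_pathMax {δ : X → X → ℝ} (hδ : IsUltrametricMap δ) {m : ℕ} (hm : 1 ≤ m)
    (v : ℕ → X) (hv : v 0 ≠ v m) : δ (v 0) (v m) ≤ pathMax δ m hm v := by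
  induction m, hm using Nat.le_induction with
  | base => exact step_le_pathMax le_rfl le_rfl
  | succ m hm ih =>
    have hprefix : pathMax δ m hm v ≤ pathMax δ (m + 1) (by omega) v :=
      pathMax_le fun t ht₁ ht₂ => step_le_pathMax ht₁ (by omega)
    have hlast : δ (v m) (v (m + 1)) ≤ pathMax δ (m + 1) (by omega) v :=
      step_le_pathMax (by omega) le_rfl
    by_cases h₀ : v 0 = v m
    · rwa [h₀]
    by_cases h₁ : v m = v (m + 1)
    · rw [← h₁]; exact (ih h₀).trans hprefix
    exact (hδ.2 _ _ _ h₀ h₁ hv).trans (max_le ((ih h₀).trans hprefix) hlast)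

section pathWeights

variable {ω : X → X → ℝ}

lemma apply_mem_pathWeights (x y : X) : ω x y ∈ pathWeights ω x y := by
  refine ⟨1, le_rfl, fun t => if t = 0 then x else y, by simp, by simp, ?_⟩
  simp [pathMax]

lemma pathWeights_finite [Finite X] (x y : X) : (pathWeights ω x y).Finite :=
  (Set.finite_range _).subset fun _ ⟨_, _, _, _, _, hr⟩ => hr ▸ pathMax_mem_range

lemma exists_mem_pathWeights_le_of_comm (hω : ∀ a b, ω a b = ω b a) {x y : X} {r : ℝ}
    (hr : r ∈ pathWeights ω y x) : ∃ r' ∈ pathWeights ω x y, r' ≤ r := by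
  obtain ⟨m, hm, v, hv₀, hvm, rfl⟩ := hr
  refine ⟨_, ⟨m, hm, fun t => v (m - t), by simpa, by simpa, rfl⟩, pathMax_le fun t ht₁ ht₂ => ?_⟩
  -- step `t` of the reversed sequence is step `m + 1 - t` of `v`, traversed backwards
  have h := step_le_pathMax (ω := ω) (hm := hm) (v := v) (t := m + 1 - t) (by omega) (by omega)
  rwa [show m + 1 - t - 1 = m - t by omega, show m + 1 - t = m - (t - 1) by omega, hω] at h

lemma exists_mem_pathWeights_le_max {x y z : X} {r₁ r₂ : ℝ} (h₁ : r₁ ∈ pathWeights ω x y)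
    (h₂ : r₂ ∈ pathWeights ω y z) : ∃ r ∈ pathWeights ω x z, r ≤ max r₁ r₂ := by
  obtain ⟨m, hm, v, hv₀, hvm, rfl⟩ := h₁
  obtain ⟨n, -, w, hw₀, hwn, rfl⟩ := h₂
  let u : ℕ → X := fun t => if t ≤ m then v t else w (t - m)
  have hu : ∀ t, m ≤ t → u t = w (t - m) := fun t ht => by
    rcases ht.eq_or_lt with rfl | ht
    · simp [u, hvm, hw₀]
    · simp [u, ht.not_ge]
  refine ⟨_, ⟨m + n, by omega, u, by simp [u, hv₀], by rw [hu _ (by omega)]; simpa, rfl⟩,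
    pathMax_le fun t ht₁ ht₂ => ?_⟩
  by_cases htm : t ≤ m
  · simp only [u, htm, show t - 1 ≤ m by omega, if_true]
    exact (step_le_pathMax ht₁ htm).trans (le_max_left _ _)
  · rw [hu t (by omega), hu (t - 1) (by omega), show t - 1 - m = t - m - 1 by omega]
    exact (step_le_pathMax (by omega) (by omega)).trans (le_max_right _ _)

end pathWeights

section subdomUltra

variable {ω : X → X → ℝ}

@[simp]
lemma subdomUltra_self (x : X) : subdomUltra ω x x = 0 := if_pos rfl

lemma subdomUltra_of_ne {x y : X} (h : x ≠ y) : subdomUltra ω x y = sInf (pathWeights ω x y) :=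
  if_neg h

lemma subdomUltra_le_of_mem [Finite X] {x y : X} (h : x ≠ y) {r : ℝ}
    (hr : r ∈ pathWeights ω x y) : subdomUltra ω x y ≤ r := by
  rw [subdomUltra_of_ne h]
  exact csInf_le (pathWeights_finite x y).bddBelow hr

lemma subdomUltra_mem_pathWeights [Finite X] {x y : X} (h : x ≠ y) :
    subdomUltra ω x y ∈ pathWeights ω x y := by
  rw [subdomUltra_of_ne h]
  exact Set.Nonempty.csInf_mem ⟨_, apply_mem_pathWeights x y⟩ (pathWeights_finite x y)

lemma subdomUltra_le [Finite X] (hω : ∀ x, 0 ≤ ω x x) (x y : X) : subdomUltra ω x y ≤ ω x y := by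
  rcases eq_or_ne x y with rfl | h
  · simpa using hω x
  · exact subdomUltra_le_of_mem h (apply_mem_pathWeights x y)

lemma subdomUltra_comm [Finite X] (hω : ∀ a b, ω a b = ω b a) (x y : X) :
    subdomUltra ω x y = subdomUltra ω y x := by
  suffices key : ∀ x y : X, subdomUltra ω x y ≤ subdomUltra ω y x from
    (key x y).antisymm (key y x)
  intro x y
  rcases eq_or_ne x y with rfl | h
  · rfl
  obtain ⟨r, hr, hle⟩ := exists_mem_pathWeights_le_of_comm hω (subdomUltra_mem_pathWeights h.symm)
  exact (subdomUltra_le_of_mem h hr).trans hle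

lemma subdomUltra_le_max [Finite X] {x y z : X} (hxy : x ≠ y) (hyz : y ≠ z) (hxz : x ≠ z) :
    subdomUltra ω x z ≤ max (subdomUltra ω x y) (subdomUltra ω y z) := by
  obtain ⟨r, hr, hle⟩ := exists_mem_pathWeights_le_max (subdomUltra_mem_pathWeights hxy)
    (subdomUltra_mem_pathWeights hyz)
  exact (subdomUltra_le_of_mem hxz hr).trans hle

lemma isUltrametricMap_subdomUltra [Finite X] (hω : ∀ a b, ω a b = ω b a) :
    IsUltrametricMap (subdomUltra ω) :=
  ⟨⟨subdomUltra_self, subdomUltra_comm hω⟩, fun _ _ _ => subdomUltra_le_max⟩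

lemma IsUltrametricMap.le_subdomUltra {δ : X → X → ℝ} (hδ : IsUltrametricMap δ)
    (hδω : ∀ a b, δ a b ≤ ω a b) (x y : X) : δ x y ≤ subdomUltra ω x y := by
  rcases eq_or_ne x y with rfl | h
  · simp [hδ.1.1]
  rw [subdomUltra_of_ne h]
  refine le_csInf ⟨_, apply_mem_pathWeights x y⟩ ?_
  rintro _ ⟨m, hm, v, rfl, rfl, rfl⟩
  exact (hδ.le_pathMax hm v h).trans (pathMax_mono hδω)

end subdomUltra

theorem stmt15_general [Fintype X] (ω : X → X → ℝ) (hω : IsDissimilarity ω) :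
    IsUltrametricMap (subdomUltra ω) ∧
    (∀ x y : X, subdomUltra ω x y ≤ ω x y) ∧
    ∀ δ : X → X → ℝ, IsUltrametricMap δ → (∀ x y : X, δ x y ≤ ω x y) →
      ∀ x y : X, δ x y ≤ subdomUltra ω x y :=
  ⟨isUltrametricMap_subdomUltra hω.2, subdomUltra_le fun x => (hω.1 x).ge,
    fun _ hδ hδω => hδ.le_subdomUltra hδω⟩

/-- For a dissimilarity map ω on a finite set X with at least two
elements, the subdominant ultrametric ω_U is an ultrametric, lies below ω, and is the
componentwise greatest ultrametric below ω. -/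
theorem stmt15 [Fintype X] [Nontrivial X] (ω : X → X → ℝ) (hω : IsDissimilarity ω) :
    IsUltrametricMap (subdomUltra ω) ∧
    (∀ x y : X, subdomUltra ω x y ≤ ω x y) ∧
    ∀ δ : X → X → ℝ, IsUltrametricMap δ → (∀ x y : X, δ x y ≤ ω x y) →
      ∀ x y : X, δ x y ≤ subdomUltra ω x y :=
  stmt15_general ω hω
end
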